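/- Advice gap of the penalized optimal policy: fix β > 0 and let π*_β be a deterministic Markov policy that is Bellman-optimal for the β-penalized machine MDP, i.e. π*_{h,β}(s) ∈ argmax_{a∈Ā} Q*_{h,β}(s,a) for all h ∈ {1,…,H} and s ∈ S. Then for every s ∈ S and h ∈ {1,…,H} such that π*_{h,β}(s) ≠ defer, one has Q*_h(s, π*_{h,β}(s)) − V^{π^H}_h(s) ≥ β. -/

import Mathlib

open Finset

noncomputable section

variable {S A B : Type*}

/-- Human action distribution `ℙ_h(a|s,a^M)` given machine advice (`none` = defer). -/
def Pact [DecidableEq A] (piH : ℕ → S → A → ℝ) (θ : S → A → ℝ)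
    (h : ℕ) (s : S) (aM : Option A) (a : A) : ℝ :=
  match aM with
  | Option.none => piH h s a
  | Option.some b => if a = b then θ s b else (1 - θ s b) * piH h s a / (1 - piH h s b)

/-- Machine transition kernel `p^M_h(s'|s,a^M)`. -/
def pM [Fintype A] [DecidableEq A] (p : ℕ → S → A → S → ℝ) (piH : ℕ → S → A → ℝ)
    (θ : S → A → ℝ) (h : ℕ) (s : S) (aM : Option A) (s' : S) : ℝ :=
  ∑ a : A, p h s a s' * Pact piH θ h s aM a

/-- Machine reward `r^M_h(s,a^M)`. -/
def rM [Fintype A] [DecidableEq A] (r : ℕ → S → A → ℝ) (piH : ℕ → S → A → ℝ)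
    (θ : S → A → ℝ) (h : ℕ) (s : S) (aM : Option A) : ℝ :=
  ∑ a : A, r h s a * Pact piH θ h s aM a

/-- Indicator of advising (`a^M ≠ defer`). -/
def indAdv : Option A → ℝ := fun aM => match aM with
  | Option.none => 0
  | Option.some _ => 1

/-- The β-penalized machine reward `r^M_{h,β}(s,a) = r^M_h(s,a) − β·1{a ≠ defer}`. -/
def rMpen [Fintype A] [DecidableEq A] (r : ℕ → S → A → ℝ) (piH : ℕ → S → A → ℝ)
    (θ : S → A → ℝ) (β : ℝ) (h : ℕ) (s : S) (aM : Option A) : ℝ :=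
  rM r piH θ h s aM - β * indAdv aM

/-- The always-defer policy. -/
def deferPol : ℕ → S → Option A := fun _ _ => Option.none

/-- Value with `k` remaining steps starting at stage `h`. -/
def Vfuel [Fintype S] (P : ℕ → S → B → S → ℝ) (R : ℕ → S → B → ℝ)
    (pol : ℕ → S → B) : ℕ → ℕ → S → ℝ
  | _, 0, _ => 0
  | h, k + 1, s =>
      R h s (pol h s) + ∑ s' : S, P h s (pol h s) s' * Vfuel P R pol (h + 1) k s'

/-- Value function `V^π_h(s)` of a deterministic Markov policy with horizon `H`:
`V^π_{H+1} = 0` and `V^π_h(s) = R_h(s,π_h(s)) + Σ_{s'} P_h(s'|s,π_h(s)) V^π_{h+1}(s')`. -/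
def Vval [Fintype S] (H : ℕ) (P : ℕ → S → B → S → ℝ) (R : ℕ → S → B → ℝ)
    (pol : ℕ → S → B) (h : ℕ) (s : S) : ℝ :=
  Vfuel P R pol h (H + 1 - h) s

/-- Optimal value function: supremum over deterministic Markov policies. -/
def Vstar [Fintype S] (H : ℕ) (P : ℕ → S → B → S → ℝ) (R : ℕ → S → B → ℝ)
    (h : ℕ) (s : S) : ℝ :=
  ⨆ pol : ℕ → S → B, Vval H P R pol h s

/-- Optimal Q-function `Q*_h(s,b) = R_h(s,b) + Σ_{s'} P_h(s'|s,b) V*_{h+1}(s')`. -/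
def Qstar [Fintype S] (H : ℕ) (P : ℕ → S → B → S → ℝ) (R : ℕ → S → B → ℝ)
    (h : ℕ) (s : S) (b : B) : ℝ :=
  R h s b + ∑ s' : S, P h s b s' * Vstar H P R (h + 1) s'

/-- Q-function of a policy with `k` remaining steps. -/
def Qfuel [Fintype S] (P : ℕ → S → B → S → ℝ) (R : ℕ → S → B → ℝ)
    (pol : ℕ → S → B) : ℕ → ℕ → S → B → ℝ
  | _, 0, _, _ => 0
  | h, k + 1, s, b =>
      R h s b + ∑ s' : S, P h s b s' * Qfuel P R pol (h + 1) k s' (pol (h + 1) s')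

/-- Q-function `Q^π_h(s,b)` of a policy with horizon `H` (`Q^π_{H+1} = 0`). -/
def Qval [Fintype S] (H : ℕ) (P : ℕ → S → B → S → ℝ) (R : ℕ → S → B → ℝ)
    (pol : ℕ → S → B) (h : ℕ) (s : S) (b : B) : ℝ :=
  Qfuel P R pol h (H + 1 - h) s b

end

/-!
The penalty only ever lowers rewards, so `V*_β ≤ V*`; and it does not touch deferring, so the
human's own value is attained by a policy of the penalized MDP and `V^{π^H}_h ≤ Q*_{h,β}(s, defer)`.
Optimality of `π*_β` gives `Q*_{h,β}(s, defer) ≤ Q*_{h,β}(s, π*_{h,β}(s))`, and when that action is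
advice its penalized reward is exactly `β` below the unpenalized one while the continuation values
satisfy `V*_β ≤ V*`; chaining these yields the gap `β`.
-/

section ValueFunctions

variable {S B : Type*} [Fintype S] {H : ℕ} {P : ℕ → S → B → S → ℝ} {R R' : ℕ → S → B → ℝ}
  {pol : ℕ → S → B} {h : ℕ} {s : S}

theorem exists_abs_vfuel_le [Finite B] (P : ℕ → S → B → S → ℝ) (R : ℕ → S → B → ℝ) (k : ℕ) :
    ∀ h, ∃ C, ∀ pol s, |Vfuel P R pol h k s| ≤ C := by
  induction k with
  | zero => exact fun _ => ⟨0, fun _ _ => by simp [Vfuel]⟩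
  | succ k ih =>
    intro h
    obtain ⟨C, hC⟩ := ih (h + 1)
    obtain ⟨MR, hMR⟩ := Finite.exists_le fun x : S × B => |R h x.1 x.2|
    obtain ⟨MP, hMP⟩ := Finite.exists_le fun x : S × B × S => |P h x.1 x.2.1 x.2.2|
    refine ⟨MR + Fintype.card S * (MP * C), fun pol s => ?_⟩
    have hcont : ∀ s', |P h s (pol h s) s' * Vfuel P R pol (h + 1) k s'| ≤ MP * C := fun s' => by
      rw [abs_mul]
      exact mul_le_mul (hMP (s, pol h s, s')) (hC pol s') (abs_nonneg _)
        ((abs_nonneg _).trans (hMP (s, pol h s, s')))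
    calc |Vfuel P R pol h (k + 1) s|
        ≤ |R h s (pol h s)| + ∑ s', |P h s (pol h s) s' * Vfuel P R pol (h + 1) k s'| :=
          (abs_add_le _ _).trans (add_le_add_right (abs_sum_le_sum_abs _ _) _)
      _ ≤ MR + ∑ _s' : S, MP * C := add_le_add (hMR (s, pol h s)) (sum_le_sum fun s' _ => hcont s')
      _ = MR + Fintype.card S * (MP * C) := by rw [sum_const, nsmul_eq_mul, card_univ]

/-- Without this, `Vstar` (an `iSup` over policies in `ℝ`) could be the junk value `0`. -/
theorem bddAbove_range_vval [Finite B] (H : ℕ) (P : ℕ → S → B → S → ℝ) (R : ℕ → S → B → ℝ)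
    (h : ℕ) (s : S) : BddAbove (Set.range fun pol => Vval H P R pol h s) := by
  obtain ⟨C, hC⟩ := exists_abs_vfuel_le P R (H + 1 - h) h
  exact ⟨C, by rintro _ ⟨pol, rfl⟩; exact (le_abs_self _).trans (hC pol s)⟩

theorem vval_le_vstar [Finite B] : Vval H P R pol h s ≤ Vstar H P R h s :=
  le_ciSup (bddAbove_range_vval H P R h s) pol

theorem vval_eq_add_sum (hh : h ≤ H) :
    Vval H P R pol h s
      = R h s (pol h s) + ∑ s', P h s (pol h s) s' * Vval H P R pol (h + 1) s' := by
  rw [Vval, show H + 1 - h = H + 1 - (h + 1) + 1 by omega]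
  rfl

theorem vfuel_congr_reward (hRR : ∀ j s, R j s (pol j s) = R' j s (pol j s)) (k : ℕ) :
    ∀ h s, Vfuel P R pol h k s = Vfuel P R' pol h k s := by
  induction k with
  | zero => exact fun _ _ => rfl
  | succ k ih => intro h s; simp only [Vfuel, hRR, ih]

theorem vfuel_mono_reward (hR : R ≤ R') (k : ℕ) :
    ∀ h, (∀ j, h ≤ j → j < h + k → ∀ s b s', 0 ≤ P j s b s') →
      ∀ s, Vfuel P R pol h k s ≤ Vfuel P R' pol h k s := by
  induction k with
  | zero => exact fun _ _ _ => le_rfl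
  | succ k ih =>
    intro h hP s
    have hnext := ih (h + 1) fun j hj hjk => hP j (by omega) (by omega)
    simp only [Vfuel]
    gcongr with s'
    · exact hR h s (pol h s)
    · exact hP h le_rfl (by omega) s _ s'
    · exact hnext s'

variable (hP : ∀ j, h ≤ j → j ≤ H → ∀ s b s', 0 ≤ P j s b s')
include hP

theorem vval_mono_reward (hR : R ≤ R') : Vval H P R pol h s ≤ Vval H P R' pol h s :=
  vfuel_mono_reward hR _ h (fun j hj hjk => hP j hj (by omega)) s

theorem vstar_mono_reward [Finite B] [Nonempty B] (hR : R ≤ R') :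
    Vstar H P R h s ≤ Vstar H P R' h s :=
  ciSup_le fun _ => (vval_mono_reward hP hR).trans vval_le_vstar

theorem vval_le_qstar [Finite B] (hh : h ≤ H) : Vval H P R pol h s ≤ Qstar H P R h s (pol h s) := by
  rw [vval_eq_add_sum hh, Qstar]
  gcongr with s'
  · exact hP h le_rfl hh s _ s'
  · exact vval_le_vstar

theorem qstar_sub_reward_le_of_le [Finite B] [Nonempty B] (hh : h ≤ H) (hR : R ≤ R')
    (b : B) :
    Qstar H P R h s b - R h s b ≤ Qstar H P R' h s b - R' h s b := by
  simp only [Qstar, add_sub_cancel_left]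
  gcongr with s'
  · exact hP h le_rfl hh s b s'
  · exact vstar_mono_reward (fun j hj hjH => hP j (by omega) hjH) hR

end ValueFunctions

section MachineMDP

variable {S A : Type*} [DecidableEq A] {piH : ℕ → S → A → ℝ} {θ : S → A → ℝ} {h : ℕ} {s : S}

theorem pact_nonneg (hpi : ∀ a, 0 ≤ piH h s a) (hpi_le : ∀ a, piH h s a ≤ 1)
    (hθ : ∀ a, 0 ≤ θ s a ∧ θ s a ≤ 1) (aM : Option A) (a : A) : 0 ≤ Pact piH θ h s aM a := by
  cases aM with
  | none => exact hpi a
  | some b =>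
    have hθb := hθ b
    have hden : 0 ≤ 1 - piH h s b := by linarith [hpi_le b]
    simp only [Pact]
    split_ifs
    · exact hθb.1
    · exact div_nonneg (mul_nonneg (by linarith) (hpi a)) hden

variable [Fintype A]

theorem pM_nonneg {p : ℕ → S → A → S → ℝ} (hp : ∀ a s', 0 ≤ p h s a s')
    (hpi : ∀ a, 0 ≤ piH h s a) (hpi_le : ∀ a, piH h s a ≤ 1) (hθ : ∀ a, 0 ≤ θ s a ∧ θ s a ≤ 1)
    (aM : Option A) (s' : S) : 0 ≤ pM p piH θ h s aM s' :=
  sum_nonneg fun a _ => mul_nonneg (hp a s') (pact_nonneg hpi hpi_le hθ aM a)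

variable {r : ℕ → S → A → ℝ} {β : ℝ}

theorem rMpen_le_rM (hβ : 0 ≤ β) : rMpen r piH θ β ≤ rM r piH θ := by
  intro h s aM
  cases aM <;> simp [rMpen, indAdv, hβ]

theorem rMpen_none : rMpen r piH θ β h s none = rM r piH θ h s none := by
  simp [rMpen, indAdv]

theorem rMpen_some (b : A) : rMpen r piH θ β h s (some b) = rM r piH θ h s (some b) - β := by
  simp [rMpen, indAdv]

end MachineMDP

theorem advice_gap_of_penalized_optimal_general
    {S A : Type*} [Fintype S] [Fintype A] [DecidableEq A]
    (H : ℕ)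
    (p : ℕ → S → A → S → ℝ) (r : ℕ → S → A → ℝ) (piH : ℕ → S → A → ℝ)
    (hp : ∀ h, 1 ≤ h → h ≤ H → ∀ (s : S) (a : A),
      (∀ s' : S, 0 ≤ p h s a s') ∧ ∑ s' : S, p h s a s' = 1)
    (hpiH : ∀ h, 1 ≤ h → h ≤ H → ∀ s : S,
      (∀ a : A, 0 ≤ piH h s a) ∧ ∑ a : A, piH h s a = 1)
    (hpiHlt : ∀ h, 1 ≤ h → h ≤ H → ∀ (s : S) (a : A), piH h s a < 1)
    (θ : S → A → ℝ) (hθ : ∀ (s : S) (a : A), 0 ≤ θ s a ∧ θ s a ≤ 1)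
    (β : ℝ) (hβ : 0 < β)
    (polβ : ℕ → S → Option A)
    (hopt : ∀ h, 1 ≤ h → h ≤ H → ∀ (s : S) (a : Option A),
      Qstar H (pM p piH θ) (rMpen r piH θ β) h s a
        ≤ Qstar H (pM p piH θ) (rMpen r piH θ β) h s (polβ h s)) :
    ∀ (s : S) (h : ℕ), 1 ≤ h → h ≤ H → polβ h s ≠ Option.none →
      β ≤ Qstar H (pM p piH θ) (rM r piH θ) h s (polβ h s)
            - Vval H (pM p piH θ) (rM r piH θ) deferPol h s := by
  intro s h hh hhH hadvice
  obtain ⟨b, hb⟩ := Option.ne_none_iff_exists'.mp hadvice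
  have hP : ∀ j, h ≤ j → j ≤ H → ∀ s a s', 0 ≤ pM p piH θ j s a s' := fun j hj hjH s =>
    pM_nonneg (fun a => (hp j (by omega) hjH s a).1) (hpiH j (by omega) hjH s).1
      (fun a => (hpiHlt j (by omega) hjH s a).le) (hθ s)
  have hdefer : Vval H (pM p piH θ) (rM r piH θ) deferPol h s
      ≤ Qstar H (pM p piH θ) (rMpen r piH θ β) h s none :=
    calc Vval H (pM p piH θ) (rM r piH θ) deferPol h s
        = Vval H (pM p piH θ) (rMpen r piH θ β) deferPol h s :=
          vfuel_congr_reward (fun _ _ => rMpen_none.symm) _ h s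
      _ ≤ _ := vval_le_qstar hP hhH
  have hgap := qstar_sub_reward_le_of_le (s := s) (R := rMpen r piH θ β) hP hhH
    (rMpen_le_rM hβ.le) (some b)
  have hopt_defer := hopt h hh hhH s none
  rw [rMpen_some, hb.symm] at hgap
  linarith

/-- Proposition 1: advice gap of the β-penalized optimal policy. -/
theorem advice_gap_of_penalized_optimal
    {S A : Type*} [Fintype S] [Fintype A] [Nonempty S] [Nonempty A] [DecidableEq A]
    (H : ℕ) (hH : 1 ≤ H)
    (p : ℕ → S → A → S → ℝ) (r : ℕ → S → A → ℝ) (piH : ℕ → S → A → ℝ)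
    (hp : ∀ h, 1 ≤ h → h ≤ H → ∀ (s : S) (a : A),
      (∀ s' : S, 0 ≤ p h s a s') ∧ ∑ s' : S, p h s a s' = 1)
    (hr : ∀ h, 1 ≤ h → h ≤ H → ∀ (s : S) (a : A), 0 ≤ r h s a ∧ r h s a ≤ 1)
    (hpiH : ∀ h, 1 ≤ h → h ≤ H → ∀ s : S,
      (∀ a : A, 0 ≤ piH h s a) ∧ ∑ a : A, piH h s a = 1)
    (hpiHlt : ∀ h, 1 ≤ h → h ≤ H → ∀ (s : S) (a : A), piH h s a < 1)
    (θ : S → A → ℝ) (hθ : ∀ (s : S) (a : A), 0 ≤ θ s a ∧ θ s a ≤ 1)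
    (β : ℝ) (hβ : 0 < β)
    (polβ : ℕ → S → Option A)
    (hopt : ∀ h, 1 ≤ h → h ≤ H → ∀ (s : S) (a : Option A),
      Qstar H (pM p piH θ) (rMpen r piH θ β) h s a
        ≤ Qstar H (pM p piH θ) (rMpen r piH θ β) h s (polβ h s)) :
    ∀ (s : S) (h : ℕ), 1 ≤ h → h ≤ H → polβ h s ≠ Option.none →
      β ≤ Qstar H (pM p piH θ) (rM r piH θ) h s (polβ h s)
            - Vval H (pM p piH θ) (rM r piH θ) deferPol h s :=
  advice_gap_of_penalized_optimal_general H p r piH hp hpiH hpiHlt θ hθ β hβ polβ hopt
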